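/- arXiv:1808.00407 — 3 statements merged into one kernel-verified Lean document; each statement's English description precedes it below -/
import Mathlib

section
/- Let p > 1, m, q > 0, 0 ≤ α < p-1, 0 ≤ β ≤ m with δ := (p-1-α)(p-1-β) - qm > 0, and let Y∞, Z∞, W∞ > 0 be as defined by Y∞ = (p(p-1-α)+q)/δ, Z∞ = (m(p-1)/(p-1-α))Y∞ + N + α/(p-1-α), W∞ = (p-1)Y∞ + N - p (with N ≥ 2 so that Z∞, W∞ > 0). Set a = Y∞ + ((p-1-α)/(p-1))Z∞ + W∞, b = ((p-1-α)/(p-1))Y∞Z∞ + ((p-1-β)/(p-1))Y∞W∞ + ((p-1-α)/(p-1))Z∞W∞, c = (δ/(p-1)²)Y∞Z∞W∞. Then ab > 9c. -/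
/-- For the characteristic polynomial coefficients `a, b, c` at the positive equilibrium
`P∞ = (Y∞, Z∞, W∞)` one has `a*b > 9*c`. -/
theorem stmt_2 (p m q α β N : ℝ)
    (hp : 1 < p) (hm : 0 < m) (hq : 0 < q) (hα0 : 0 ≤ α) (hα : α < p - 1)
    (hβ0 : 0 ≤ β) (hβm : β ≤ m) (hN : 2 ≤ N)
    (δ : ℝ) (hδdef : δ = (p - 1 - α) * (p - 1 - β) - q * m) (hδ : 0 < δ)
    (Yinf Zinf Winf : ℝ)
    (hY : Yinf = (p * (p - 1 - α) + q) / δ)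
    (hZ : Zinf = (m * (p - 1) / (p - 1 - α)) * Yinf + N + α / (p - 1 - α))
    (hW : Winf = (p - 1) * Yinf + N - p)
    (hYpos : 0 < Yinf) (hZpos : 0 < Zinf) (hWpos : 0 < Winf)
    (a b c : ℝ)
    (ha : a = Yinf + ((p - 1 - α) / (p - 1)) * Zinf + Winf)
    (hb : b = ((p - 1 - α) / (p - 1)) * Yinf * Zinf
        + ((p - 1 - β) / (p - 1)) * Yinf * Winf
        + ((p - 1 - α) / (p - 1)) * Zinf * Winf)
    (hc : c = (δ / (p - 1) ^ 2) * Yinf * Zinf * Winf) :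
    a * b > 9 * c := by
  have hp1 : 0 < p - 1 := by linarith
  have hpα : 0 < p - 1 - α := by linarith
  have hpβ : 0 < p - 1 - β := by
    nlinarith [mul_pos hq hm]
  set k : ℝ := (p - 1 - α) / (p - 1) with hk
  set l : ℝ := (p - 1 - β) / (p - 1) with hl
  have hkpos : 0 < k := div_pos hpα hp1
  have hlpos : 0 < l := div_pos hpβ hp1
  have hl1 : l ≤ 1 := by
    rw [hl, div_le_one hp1]; linarith
  have key : a * b ≥ 9 * (k * l) * (Yinf * Zinf * Winf) := by
    rw [ha, hb]
    nlinarith [mul_nonneg (mul_nonneg hkpos.le hZpos.le) (sq_nonneg (Yinf - Winf)),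
      mul_nonneg hWpos.le (sq_nonneg (l * Yinf - k * Zinf)),
      mul_nonneg hYpos.le (sq_nonneg (k * Zinf - l * Winf)),
      mul_nonneg (mul_nonneg (mul_nonneg (mul_self_nonneg Yinf) hWpos.le) hlpos.le) (sub_nonneg.mpr hl1),
      mul_nonneg (mul_nonneg (mul_nonneg hYpos.le (mul_self_nonneg Winf)) hlpos.le) (sub_nonneg.mpr hl1),
      mul_nonneg (mul_nonneg (mul_nonneg (mul_nonneg hYpos.le hZpos.le) hWpos.le) hkpos.le) (sub_nonneg.mpr hl1)]
  have hkl : k * l = (δ + q * m) / (p - 1) ^ 2 := by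
    rw [hk, hl, hδdef]; field_simp; ring
  have hcc : 9 * c < 9 * (k * l) * (Yinf * Zinf * Winf) := by
    rw [hc, hkl]
    have hpos : 0 < 9 * (q * m / (p - 1) ^ 2 * (Yinf * Zinf * Winf)) := by positivity
    have heq : 9 * ((δ + q * m) / (p - 1) ^ 2) * (Yinf * Zinf * Winf)
        = 9 * (δ / (p - 1) ^ 2 * Yinf * Zinf * Winf)
          + 9 * (q * m / (p - 1) ^ 2 * (Yinf * Zinf * Winf)) := by ring
    linarith
  linarith
end

section
/- Let N ≥ 2, p > 1, 0 ≤ α < p-1, m > 0, γ = (N-1)(p-1-α)/(p-1), and suppose w, v : (0,R) → (0,∞) are C¹ functions satisfying (w^{p-1-α})'(r) + (γ/r)w(r)^{p-1-α} = ((p-1-α)/(p-1))v(r)^m for all r ∈ (0,R), with v strictly increasing, w(0⁺) = 0. Then for all r ∈ (0,R): ((p-1-α)/(N(p-1-α)+α))·v(r)^m < (w^{p-1-α})'(r) < ((p-1-α)/(p-1))·v(r)^m. -/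
/-!
Write `f = w^{p-1-α}` and `g = ((p-1-α)/(p-1)) v^m`, so that `f' + (γ/r) f = g`. The upper bound is
immediate since `(γ/r) f > 0`. For the lower bound, `r^γ` is an integrating factor:
`(s^γ f(s))' = s^γ g(s) < s^γ g(r)` for `s < r`, and `s^γ f(s) → 0` as `s → 0⁺`, so
`r^γ f(r) < r^{γ+1} g(r)/(γ+1)`. Hence `(γ/r) f(r) < γ g(r)/(γ+1)` and `f'(r) > g(r)/(γ+1)`,
which is the claim because `(γ+1)(p-1) = N(p-1-α)+α`.
-/

open Set Filter Topology

theorem pos_of_tendsto_nhdsGT_zero_of_deriv_pos {H H' : ℝ → ℝ} {r : ℝ} (hr : 0 < r)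
    (hH0 : Tendsto H (𝓝[>] 0) (𝓝 0)) (hH : ∀ s ∈ Ioc 0 r, HasDerivAt H (H' s) s)
    (hH' : ∀ s ∈ Ioo 0 r, 0 < H' s) : 0 < H r := by
  have hmono : StrictMonoOn H (Ioc 0 r) := by
    refine strictMonoOn_of_deriv_pos (convex_Ioc 0 r)
      (fun s hs => (hH s hs).continuousAt.continuousWithinAt) fun s hs => ?_
    rw [interior_Ioc] at hs
    rw [(hH s (Ioo_subset_Ioc_self hs)).deriv]
    exact hH' s hs
  have hhalf : 0 ≤ H (r / 2) := by
    refine le_of_tendsto hH0 ?_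
    filter_upwards [Ioo_mem_nhdsGT (half_pos hr)] with s hs
    exact (hmono ⟨hs.1, by linarith [hs.2]⟩ ⟨half_pos hr, by linarith⟩ hs.2).le
  exact hhalf.trans_lt (hmono ⟨half_pos hr, by linarith⟩ ⟨hr, le_rfl⟩ (half_lt_self hr))

theorem hasDerivAt_rpow_mul {f : ℝ → ℝ} {f' γ s : ℝ} (hs : 0 < s) (hf : HasDerivAt f f' s) :
    HasDerivAt (fun t => t ^ γ * f t) (s ^ γ * (f' + γ / s * f s)) s := by
  refine ((Real.hasDerivAt_rpow_const (p := γ) (Or.inl hs.ne')).mul hf).congr_deriv ?_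
  rw [Real.rpow_sub hs, Real.rpow_one]
  ring

theorem lt_mul_of_linear_ode {f f' g : ℝ → ℝ} {γ r : ℝ} (hγ : 0 ≤ γ) (hr : 0 < r)
    (hf0 : Tendsto f (𝓝[>] 0) (𝓝 0)) (hf : ∀ s ∈ Ioc 0 r, HasDerivAt f (f' s) s)
    (hode : ∀ s ∈ Ioc 0 r, f' s + γ / s * f s = g s) (hg : StrictMonoOn g (Ioc 0 r)) :
    f r < r / (γ + 1) * g r := by
  have hγ1 : 0 < γ + 1 := by linarith
  set H : ℝ → ℝ := fun s => g r * (s ^ (γ + 1) / (γ + 1)) - s ^ γ * f s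
  have hH : ∀ s ∈ Ioc 0 r, HasDerivAt H (s ^ γ * (g r - g s)) s := by
    intro s hs
    have hpow : HasDerivAt (fun t : ℝ => t ^ (γ + 1)) ((γ + 1) * s ^ γ) s := by
      simpa using Real.hasDerivAt_rpow_const (p := γ + 1) (Or.inl hs.1.ne')
    refine (((hpow.div_const _).const_mul (g r)).sub
      (hasDerivAt_rpow_mul hs.1 (hf s hs))).congr_deriv ?_
    rw [hode s hs]
    field_simp
  have hH0 : Tendsto H (𝓝[>] 0) (𝓝 0) := by
    have hpow : ∀ q : ℝ, 0 ≤ q → Tendsto (fun s : ℝ => s ^ q) (𝓝[>] 0) (𝓝 ((0 : ℝ) ^ q)) :=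
      fun q hq => (Real.continuousAt_rpow_const 0 q (Or.inr hq)).tendsto.mono_left
        nhdsWithin_le_nhds
    have := ((hpow (γ + 1) hγ1.le).div_const (γ + 1)).const_mul (g r) |>.sub
      ((hpow γ hγ).mul hf0)
    simpa [Real.zero_rpow hγ1.ne'] using this
  have hHr : 0 < H r := pos_of_tendsto_nhdsGT_zero_of_deriv_pos hr hH0 hH fun s hs =>
    mul_pos (Real.rpow_pos_of_pos hs.1 γ)
      (sub_pos.2 (hg (Ioo_subset_Ioc_self hs) ⟨hr, le_rfl⟩ hs.2))
  have hrγ : 0 < r ^ γ := Real.rpow_pos_of_pos hr γ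
  have hHr' : 0 < r ^ γ * (r / (γ + 1) * g r - f r) := by
    convert hHr using 1
    simp only [H, Real.rpow_add_one hr.ne']
    ring
  linarith [pos_of_mul_pos_right hHr' hrγ.le]

theorem stmt_9_general (N R p α m : ℝ) (hN : 2 ≤ N)
    (hp : 1 < p) (hα : α < p - 1) (hm : 0 < m)
    (γ : ℝ) (hγ : γ = (N - 1) * (p - 1 - α) / (p - 1))
    (w v : ℝ → ℝ)
    (hwC1 : ContDiffOn ℝ 1 w (Ioo 0 R))
    (hwpos : ∀ r ∈ Ioo 0 R, 0 < w r) (hvpos : ∀ r ∈ Ioo 0 R, 0 < v r)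
    (hvmono : StrictMonoOn v (Ioo 0 R))
    (hw0 : Tendsto w (nhdsWithin 0 (Ioi 0)) (nhds 0))
    (heq : ∀ r ∈ Ioo 0 R,
      deriv (fun s => (w s) ^ (p - 1 - α)) r + (γ / r) * (w r) ^ (p - 1 - α)
        = ((p - 1 - α) / (p - 1)) * (v r) ^ m) :
    ∀ r ∈ Ioo 0 R,
      ((p - 1 - α) / (N * (p - 1 - α) + α)) * (v r) ^ m
          < deriv (fun s => (w s) ^ (p - 1 - α)) r ∧
      deriv (fun s => (w s) ^ (p - 1 - α)) r < ((p - 1 - α) / (p - 1)) * (v r) ^ m := by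
  have hp1 : 0 < p - 1 := by linarith
  have hβ : 0 < p - 1 - α := by linarith
  have hγpos : 0 < γ := by rw [hγ]; exact div_pos (mul_pos (by linarith) hβ) hp1
  have hγ1 : (γ + 1) * (p - 1) = N * (p - 1 - α) + α := by rw [hγ]; field_simp; ring
  intro r hr
  set f : ℝ → ℝ := fun s => w s ^ (p - 1 - α)
  set c := (p - 1 - α) / (p - 1) with hc
  have hf : ∀ s ∈ Ioo 0 R, HasDerivAt f (deriv f s) s := fun s hs =>
    (((hwC1.differentiableOn one_ne_zero).differentiableAt (isOpen_Ioo.mem_nhds hs)).rpow_const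
      (Or.inl (hwpos s hs).ne')).hasDerivAt
  have hf0 : Tendsto f (𝓝[>] 0) (𝓝 0) := by
    have := (Real.continuousAt_rpow_const 0 _ (Or.inr hβ.le)).tendsto.comp hw0
    rwa [Real.zero_rpow hβ.ne'] at this
  have hIoc : Ioc 0 r ⊆ Ioo 0 R := Ioc_subset_Ioo_right hr.2
  have hg : StrictMonoOn (fun s => c * v s ^ m) (Ioc 0 r) :=
    fun a ha b hb hab => mul_lt_mul_of_pos_left
      (Real.rpow_lt_rpow (hvpos a (hIoc ha)).le (hvmono (hIoc ha) (hIoc hb) hab) hm)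
      (div_pos hβ hp1)
  have hfr : f r < r / (γ + 1) * (c * v r ^ m) := lt_mul_of_linear_ode hγpos.le hr.1 hf0
    (fun s hs => hf s (hIoc hs)) (fun s hs => heq s (hIoc hs)) hg
  have hγr : 0 < γ / r := div_pos hγpos hr.1
  refine ⟨?_, ?_⟩
  · calc (p - 1 - α) / (N * (p - 1 - α) + α) * v r ^ m
        = c * v r ^ m - γ / r * (r / (γ + 1) * (c * v r ^ m)) := by
          rw [hc, ← hγ1]; field_simp [hr.1.ne']; ring
      _ < c * v r ^ m - γ / r * f r := by gcongr
      _ = deriv f r := by linarith [heq r hr]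
  · have : 0 < γ / r * f r := mul_pos hγr (Real.rpow_pos_of_pos (hwpos r hr) _)
    linarith [heq r hr]

/-- Two-sided bounds on `(w^{p-1-α})'`: inequality (2.3) of Lemma 2.1. -/
theorem stmt_9 (N R p α m : ℝ) (hN : 2 ≤ N) (hR : 0 < R)
    (hp : 1 < p) (hα0 : 0 ≤ α) (hα : α < p - 1) (hm : 0 < m)
    (γ : ℝ) (hγ : γ = (N - 1) * (p - 1 - α) / (p - 1))
    (w v : ℝ → ℝ)
    (hwC1 : ContDiffOn ℝ 1 w (Ioo 0 R)) (hvC1 : ContDiffOn ℝ 1 v (Ioo 0 R))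
    (hwpos : ∀ r ∈ Ioo 0 R, 0 < w r) (hvpos : ∀ r ∈ Ioo 0 R, 0 < v r)
    (hvmono : StrictMonoOn v (Ioo 0 R))
    (hw0 : Tendsto w (nhdsWithin 0 (Ioi 0)) (nhds 0))
    (heq : ∀ r ∈ Ioo 0 R,
      deriv (fun s => (w s) ^ (p - 1 - α)) r + (γ / r) * (w r) ^ (p - 1 - α)
        = ((p - 1 - α) / (p - 1)) * (v r) ^ m) :
    ∀ r ∈ Ioo 0 R,
      ((p - 1 - α) / (N * (p - 1 - α) + α)) * (v r) ^ m
          < deriv (fun s => (w s) ^ (p - 1 - α)) r ∧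
      deriv (fun s => (w s) ^ (p - 1 - α)) r < ((p - 1 - α) / (p - 1)) * (v r) ^ m :=
  stmt_9_general N R p α m hN hp hα hm γ hγ w v hwC1 hwpos hvpos hvmono hw0 heq
end

section
/- Let p > N ≥ 2 and suppose u, v : [0,1] → ℝ are C² with u', v' > 0 on (0,1), u'(0) = 0, v continuous on [0,1], and (p-1)·u''(r)/u'(r) + (N-1)/r = v(r)^m for all r ∈ (0,1) with m > 0. Then a contradiction follows; i.e., no such pair (u,v) exists. -/
open Set Filter Topology Real

/- Put `c = (N - 1)/(p - 1)` and let `M` bound `v ^ m` on `[0, 1]`. The equation says that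
`log u' + c log r - (M/(p - 1)) r` has non-positive derivative on `(0, 1)`, so it is
antitone there, and hence `log u'(r) ≥ const - c log r → +∞` as `r → 0⁺`. This contradicts
the boundedness of `u'`, which is continuous on the compact interval `[0, 1]`. -/

theorem antitoneOn_log_add_mul_log_sub_mul {f : ℝ → ℝ} {b c K : ℝ}
    (hf : ∀ r ∈ Ioo 0 b, 0 < f r) (hdf : DifferentiableOn ℝ f (Ioo 0 b))
    (hle : ∀ r ∈ Ioo 0 b, deriv f r / f r + c / r ≤ K) :
    AntitoneOn (fun r ↦ log (f r) + c * log r - K * r) (Ioo 0 b) := by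
  have hderiv : ∀ r ∈ Ioo 0 b, HasDerivAt (fun r ↦ log (f r) + c * log r - K * r)
      (deriv f r / f r + c / r - K) r := by
    intro r hr
    have hfr : HasDerivAt f (deriv f r) r :=
      (hdf.differentiableAt (isOpen_Ioo.mem_nhds hr)).hasDerivAt
    have h := ((hfr.log (hf r hr).ne').add ((hasDerivAt_log hr.1.ne').const_mul c)).sub
      ((hasDerivAt_id r).const_mul K)
    rw [mul_one, ← div_eq_mul_inv] at h
    exact h
  apply antitoneOn_of_deriv_nonpos (convex_Ioo 0 b)
  · exact fun r hr ↦ (hderiv r hr).continuousAt.continuousWithinAt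
  · rw [interior_Ioo]
    exact fun r hr ↦ (hderiv r hr).differentiableAt.differentiableWithinAt
  · rw [interior_Ioo]
    intro r hr
    rw [(hderiv r hr).deriv]
    linarith [hle r hr]

theorem not_bddAbove_image_Ioo_of_deriv_div_add_div_le {f : ℝ → ℝ} {b c K : ℝ}
    (hb : 0 < b) (hc : 0 < c)
    (hf : ∀ r ∈ Ioo 0 b, 0 < f r) (hdf : DifferentiableOn ℝ f (Ioo 0 b))
    (hle : ∀ r ∈ Ioo 0 b, deriv f r / f r + c / r ≤ K) :
    ¬ BddAbove (f '' Ioo 0 b) := by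
  rintro ⟨B, hB⟩
  set g : ℝ → ℝ := fun r ↦ log (f r) + c * log r - K * r
  have hg := antitoneOn_log_add_mul_log_sub_mul hf hdf hle
  have hmid : b / 2 ∈ Ioo 0 b := ⟨by positivity, by linarith⟩
  have hg_le : ∀ r ∈ Ioo 0 b, g r ≤ log B + c * log r - K * r := by
    intro r hr
    have hBr : f r ≤ B := hB (mem_image_of_mem f hr)
    simp only [g]
    linarith [log_le_log (hf r hr) hBr]
  have hbound : Tendsto (fun r ↦ c * log r + (log B - K * r)) (𝓝[>] 0) atBot :=
    (tendsto_log_nhdsGT_zero.const_mul_atBot hc).atBot_add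
      ((continuous_const.sub (continuous_const.mul continuous_id)).tendsto' 0 (log B - K * 0) rfl
        |>.mono_left nhdsWithin_le_nhds)
  obtain ⟨r, hr_lt, hr⟩ := ((hbound.eventually_lt_atBot (g (b / 2))).and
    (Ioo_mem_nhdsGT (half_pos hb))).exists
  have hr' : r ∈ Ioo 0 b := ⟨hr.1, hr.2.trans hmid.2⟩
  linarith [hg_le r hr', show g (b / 2) ≤ g r from hg hr' hmid hr.2.le]

theorem ContDiffOn.bddAbove_deriv_image_Ioo {u : ℝ → ℝ} {a b : ℝ} (hab : a < b)
    (hu : ContDiffOn ℝ 1 u (Icc a b)) : BddAbove (deriv u '' Ioo a b) := by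
  have hcont := hu.continuousOn_derivWithin (uniqueDiffOn_Icc hab) le_rfl
  refine (isCompact_Icc.bddAbove_image hcont).mono ?_
  rintro _ ⟨x, hx, rfl⟩
  exact ⟨x, Ioo_subset_Icc_self hx, derivWithin_of_mem_nhds (Icc_mem_nhds hx.1 hx.2)⟩

theorem stmt_10_general (N p m : ℝ) (hN : 2 ≤ N) (hpN : N < p) (hm : 0 < m)
    (u v : ℝ → ℝ)
    (hu : ContDiffOn ℝ 2 u (Icc 0 1))
    (hu' : ∀ r ∈ Ioo (0:ℝ) 1, 0 < deriv u r)
    (hvcont : ContinuousOn v (Icc 0 1))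
    (heq : ∀ r ∈ Ioo (0:ℝ) 1,
      (p - 1) * deriv (deriv u) r / deriv u r + (N - 1) / r = (v r) ^ m) :
    False := by
  have hp : 0 < p - 1 := by linarith
  obtain ⟨M, hM⟩ := isCompact_Icc.bddAbove_image (hvcont.rpow_const fun _ _ ↦ Or.inr hm.le)
  have hdu : DifferentiableOn ℝ (deriv u) (Ioo 0 1) :=
    ((hu.mono Ioo_subset_Icc_self).deriv_of_isOpen isOpen_Ioo le_rfl).differentiableOn
      one_ne_zero
  have hle : ∀ r ∈ Ioo (0:ℝ) 1,
      deriv (deriv u) r / deriv u r + (N - 1) / (p - 1) / r ≤ M / (p - 1) := by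
    intro r hr
    have hvr : v r ^ m ≤ M := hM (mem_image_of_mem _ (Ioo_subset_Icc_self hr))
    rw [le_div_iff₀ hp]
    calc (deriv (deriv u) r / deriv u r + (N - 1) / (p - 1) / r) * (p - 1)
        = (p - 1) * deriv (deriv u) r / deriv u r + (N - 1) / r := by field_simp
      _ ≤ M := (heq r hr).trans_le hvr
  exact not_bddAbove_image_Ioo_of_deriv_div_add_div_le one_pos (by bound) hu' hdu hle
    ((hu.of_le one_le_two).bddAbove_deriv_image_Ioo one_pos)

/-- Case `α = p-1`: no pair `(u,v)` as below can exist. -/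
theorem stmt_10 (N p m : ℝ) (hN : 2 ≤ N) (hpN : N < p) (hm : 0 < m)
    (u v : ℝ → ℝ)
    (hu : ContDiffOn ℝ 2 u (Icc 0 1)) (hv : ContDiffOn ℝ 2 v (Icc 0 1))
    (hu' : ∀ r ∈ Ioo (0:ℝ) 1, 0 < deriv u r)
    (hv' : ∀ r ∈ Ioo (0:ℝ) 1, 0 < deriv v r)
    (hu'0 : deriv u 0 = 0)
    (hvcont : ContinuousOn v (Icc 0 1))
    (heq : ∀ r ∈ Ioo (0:ℝ) 1,
      (p - 1) * deriv (deriv u) r / deriv u r + (N - 1) / r = (v r) ^ m) :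
    False :=
  stmt_10_general N p m hN hpN hm u v hu hu' hvcont heq
end
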